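/- The sum ∑_{n=1}^∞ H_n · C(2n,n) / ((n+1) · 4^n) equals 4·log 2. -/

import Mathlib

open Real Finset Filter MeasureTheory intervalIntegral

noncomputable def dd (n : ℕ) : ℝ := (Nat.centralBinom n : ℝ) / 4 ^ n

lemma dd_pos (n : ℕ) : 0 < dd n := by
  unfold dd
  have := Nat.centralBinom_pos n
  positivity

lemma dd_zero : dd 0 = 1 := by simp [dd, Nat.centralBinom]

lemma dd_one : dd 1 = 1 / 2 := by
  simp [dd, Nat.centralBinom]; norm_num

lemma dd_succ (n : ℕ) : dd (n + 1) = dd n * (2 * n + 1) / (2 * n + 2) := by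
  have h := Nat.succ_mul_centralBinom_succ n
  have h' : ((n:ℝ) + 1) * (Nat.centralBinom (n+1) : ℝ) = 2 * (2 * n + 1) * Nat.centralBinom n := by
    exact_mod_cast congrArg (Nat.cast : ℕ → ℝ) h
  have hcb : (Nat.centralBinom (n+1) : ℝ) = 2 * (2 * n + 1) * Nat.centralBinom n / (n + 1) := by
    field_simp at h' ⊢; linarith
  unfold dd
  rw [hcb, pow_succ]
  have hn : ((n:ℝ) + 1) ≠ 0 := by positivity
  field_simp
  ring

lemma dd_key (n : ℕ) : dd n / (n + 1) = 2 * (dd n - dd (n + 1)) := by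
  rw [dd_succ]
  have hn : (2 * (n:ℝ) + 2) ≠ 0 := by positivity
  field_simp
  ring


lemma dd_sq_le (n : ℕ) : dd n ^ 2 * (2 * n + 1) ≤ 1 := by
  induction n with
  | zero => simp [dd_zero]
  | succ k ih =>
    rw [dd_succ]
    have h1 : (0:ℝ) < 2 * k + 2 := by positivity
    have h2 : (0:ℝ) ≤ dd k ^ 2 := sq_nonneg _
    have key : (2 * (k:ℝ) + 1) * (2 * k + 3) ≤ (2 * k + 2) ^ 2 := by nlinarith
    push_cast
    have : (dd k * (2 * k + 1) / (2 * k + 2)) ^ 2 * (2 * ((k:ℝ)+1) + 1)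
        = dd k ^ 2 * (2 * k + 1) * ((2 * k + 1) * (2 * k + 3) / (2 * k + 2) ^ 2) := by
      push_cast; field_simp; ring
    rw [this]
    have hQ1 : (2 * (k:ℝ) + 1) * (2 * k + 3) / (2 * k + 2) ^ 2 ≤ 1 := by
      rw [div_le_one (by positivity)]; exact key
    have hQ0 : (0:ℝ) ≤ (2 * (k:ℝ) + 1) * (2 * k + 3) / (2 * k + 2) ^ 2 := by positivity
    have hd0 : (0:ℝ) ≤ dd k ^ 2 * (2 * k + 1) := by positivity
    nlinarith

lemma dd_le (n : ℕ) : dd n ≤ 1 / Real.sqrt (2 * n + 1) := by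
  have h1 : (0:ℝ) < 2 * n + 1 := by positivity
  rw [le_div_iff₀ (Real.sqrt_pos.mpr h1)]
  have := dd_sq_le n
  nlinarith [dd_pos n, Real.sq_sqrt h1.le, Real.sqrt_pos.mpr h1, sq_nonneg (dd n * Real.sqrt (2*n+1) - 1)]

lemma dd_prod (n : ℕ) : ∏ i ∈ range n, (2 * (i:ℝ) + 1) / (2 * i + 2) = dd n := by
  induction n with
  | zero => simp [dd_zero]
  | succ k ih => rw [prod_range_succ, ih, dd_succ]; push_cast; ring


lemma dd_le' (n : ℕ) (hn : 1 ≤ n) : dd n ≤ 1 / ((n:ℝ) ^ ((1:ℝ)/2)) := by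
  refine (dd_le n).trans ?_
  have h0 : (0:ℝ) ≤ n := Nat.cast_nonneg n
  rw [← Real.sqrt_eq_rpow]
  apply one_div_le_one_div_of_le
  · exact Real.sqrt_pos.mpr (by exact_mod_cast hn)
  · exact Real.sqrt_le_sqrt (by push_cast; linarith)

lemma summable_ddn : Summable (fun k : ℕ => dd (k+1) / (k+1)) := by
  have hs : Summable (fun k : ℕ => 1 / ((k:ℝ)+1) ^ ((3:ℝ)/2)) := by
    have := (Real.summable_one_div_nat_rpow (p := (3:ℝ)/2)).mpr (by norm_num)
    have h2 := (summable_nat_add_iff 1).mpr this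
    simpa using h2
  apply Summable.of_nonneg_of_le (fun k => div_nonneg (dd_pos _).le (by positivity)) _ hs
  intro k
  have h1 : dd (k+1) ≤ 1 / (((k:ℝ)+1) ^ ((1:ℝ)/2)) := by
    have := dd_le' (k+1) (by omega); push_cast at this ⊢; convert this using 3
  have hk : (0:ℝ) < (k:ℝ)+1 := by positivity
  have hsplit : ((k:ℝ)+1) ^ ((3:ℝ)/2) = ((k:ℝ)+1) ^ ((1:ℝ)/2) * ((k:ℝ)+1) := by
    rw [show (3:ℝ)/2 = 1/2 + 1 by norm_num, Real.rpow_add hk, Real.rpow_one]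
  rw [hsplit, ← div_div]
  have h2 : dd (k+1) / ((k:ℝ)+1) ≤ (1 / (((k:ℝ)+1) ^ ((1:ℝ)/2))) / ((k:ℝ)+1) :=
    (div_le_div_iff_of_pos_right hk).mpr h1
  exact h2

noncomputable def HH (n : ℕ) : ℝ := ∑ k ∈ Finset.Icc 1 n, (1:ℝ)/k

lemma HH_eq (n : ℕ) : HH n = (harmonic n : ℝ) := by
  rw [harmonic_eq_sum_Icc]
  push_cast [HH]
  simp [one_div]

lemma HH_nonneg (n : ℕ) : 0 ≤ HH n := by
  unfold HH; positivity

lemma HH_le (n : ℕ) : HH n ≤ 1 + Real.log n := by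
  rw [HH_eq]; exact harmonic_le_one_add_log n

lemma HH_succ (n : ℕ) : HH (n+1) = HH n + 1/(n+1) := by
  unfold HH
  rw [← Finset.Ico_add_one_right_eq_Icc, Finset.sum_Ico_succ_top (by omega), Finset.Ico_add_one_right_eq_Icc]
  push_cast; ring

lemma tendsto_Hdd : Filter.Tendsto (fun n : ℕ => HH n * dd n) Filter.atTop (nhds 0) := by
  have key : Filter.Tendsto (fun x : ℝ => (1 + Real.log x) / x ^ ((1:ℝ)/2)) Filter.atTop (nhds 0) := by
    have h1 : Filter.Tendsto (fun x : ℝ => Real.log x / x ^ ((1:ℝ)/2)) Filter.atTop (nhds 0) :=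
      (isLittleO_log_rpow_atTop (by norm_num)).tendsto_div_nhds_zero
    have h2 : Filter.Tendsto (fun x : ℝ => 1 / x ^ ((1:ℝ)/2)) Filter.atTop (nhds 0) := by
      apply Filter.Tendsto.div_atTop tendsto_const_nhds
      exact tendsto_rpow_atTop (by norm_num)
    have := h2.add h1
    simpa [add_div] using this
  have keyN : Filter.Tendsto (fun n : ℕ => (1 + Real.log n) / (n:ℝ) ^ ((1:ℝ)/2)) Filter.atTop (nhds 0) :=
    key.comp tendsto_natCast_atTop_atTop
  apply squeeze_zero' (Filter.Eventually.of_forall (fun n => mul_nonneg (HH_nonneg n) (dd_pos n).le))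
    _ keyN
  filter_upwards [Filter.eventually_ge_atTop 1] with n hn
  have h1 : HH n ≤ 1 + Real.log n := HH_le n
  have h2 : dd n ≤ 1 / ((n:ℝ) ^ ((1:ℝ)/2)) := dd_le' n hn
  have h3 : (0:ℝ) < (n:ℝ) ^ ((1:ℝ)/2) := by
    apply Real.rpow_pos_of_pos; exact_mod_cast hn
  have h4 : 0 ≤ 1 + Real.log n := by
    have : (1:ℝ) ≤ n := by exact_mod_cast hn
    have := Real.log_nonneg this
    linarith
  calc HH n * dd n ≤ (1 + Real.log n) * (1 / ((n:ℝ) ^ ((1:ℝ)/2))) :=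
        mul_le_mul h1 h2 (dd_pos n).le h4
    _ = (1 + Real.log n) / (n:ℝ) ^ ((1:ℝ)/2) := by ring


lemma integral_sin_even (n : ℕ) : ∫ x in (0:ℝ)..π, Real.sin x ^ (2*n) = π * dd n := by
  rw [integral_sin_pow_even, dd_prod]

noncomputable def gg (x : ℝ) : ℝ := -Real.log (1 - Real.sin x ^ 2)

lemma gg_eq (x : ℝ) : gg x = -2 * Real.log |Real.cos x| := by
  unfold gg
  rw [← Real.cos_sq' x, Real.log_pow, ← Real.log_abs]
  push_cast; ring

lemma gg_nonneg (x : ℝ) : 0 ≤ gg x := by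
  unfold gg
  have h1 : Real.sin x ^ 2 ≤ 1 := Real.sin_sq_le_one x
  have := Real.log_nonpos (by nlinarith : (0:ℝ) ≤ 1 - Real.sin x ^ 2) (by nlinarith)
  linarith

lemma gg_measurable : Measurable gg :=
  (Real.measurable_log.comp (by fun_prop)).neg

noncomputable def FF (k : ℕ) (x : ℝ) : ℝ := (Real.sin x ^ 2) ^ (k+1) / ((k:ℝ)+1)

lemma FF_nonneg (k : ℕ) (x : ℝ) : 0 ≤ FF k x := by unfold FF; positivity

lemma FF_cont (k : ℕ) : Continuous (FF k) := by unfold FF; fun_prop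

lemma FF_lintegral (k : ℕ) :
    ∫⁻ x in Set.Ioc 0 π, ENNReal.ofReal (FF k x) = ENNReal.ofReal (π * dd (k+1) / ((k:ℝ)+1)) := by
  rw [← ofReal_integral_eq_lintegral_ofReal ((FF_cont k).integrableOn_Ioc)
    (Filter.Eventually.of_forall (FF_nonneg k))]
  congr 1
  rw [← intervalIntegral.integral_of_le Real.pi_pos.le]
  have : ∀ x, FF k x = Real.sin x ^ (2*(k+1)) / ((k:ℝ)+1) := by
    intro x; unfold FF; rw [pow_mul]
  simp_rw [this]
  rw [intervalIntegral.integral_div, integral_sin_even]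

lemma cos_zero_null : volume {x : ℝ | Real.cos x = 0} = 0 := by
  have : {x : ℝ | Real.cos x = 0} ⊆ Set.range (fun n : ℤ => (2*n+1) * π / 2) := by
    intro x hx
    rw [Set.mem_setOf_eq, Real.cos_eq_zero_iff] at hx
    obtain ⟨n, hn⟩ := hx
    exact ⟨n, hn.symm⟩
  exact measure_mono_null this (Set.Countable.measure_zero (Set.countable_range _) _)

lemma hsum_ae : (fun x => ∑' k, ENNReal.ofReal (FF k x))
    =ᶠ[MeasureTheory.ae (volume.restrict (Set.Ioc 0 π))] (fun x => ENNReal.ofReal (gg x)) := by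
  apply ae_restrict_of_ae
  have h0 : ∀ᵐ x : ℝ ∂volume, Real.cos x ≠ 0 := by
    rw [MeasureTheory.ae_iff]
    simpa using cos_zero_null
  filter_upwards [h0] with x hc
  have hcos : 0 < Real.cos x ^ 2 := by positivity
  have h1 : Real.sin x ^ 2 < 1 := by nlinarith [Real.sin_sq_add_cos_sq x]
  have habs : |Real.sin x ^ 2| < 1 := by
    rw [abs_of_nonneg (sq_nonneg _)]; exact h1
  have hs : HasSum (fun k => FF k x) (gg x) := by
    have := Real.hasSum_pow_div_log_of_abs_lt_one habs
    unfold FF gg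
    convert this using 2 with k

  rw [← ENNReal.ofReal_tsum_of_nonneg (fun k => FF_nonneg k x) hs.summable, hs.tsum_eq]

lemma gg_lintegral :
    ∫⁻ x in Set.Ioc 0 π, ENNReal.ofReal (gg x)
      = ENNReal.ofReal (π * ∑' k : ℕ, dd (k+1) / (k+1)) := by
  rw [lintegral_congr_ae hsum_ae.symm,
    lintegral_tsum (fun k => ((FF_cont k).measurable.ennreal_ofReal).aemeasurable)]
  simp_rw [FF_lintegral]
  rw [← ENNReal.ofReal_tsum_of_nonneg
    (fun k => by have := (dd_pos (k+1)).le; positivity)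
    (by simp_rw [mul_div_assoc]; exact summable_ddn.mul_left π)]
  congr 1
  simp_rw [mul_div_assoc]
  exact tsum_mul_left

lemma gg_integrableOn : IntegrableOn gg (Set.Ioc 0 π) := by
  refine ⟨gg_measurable.aestronglyMeasurable, ?_⟩
  rw [hasFiniteIntegral_iff_ofReal (Filter.Eventually.of_forall gg_nonneg)]
  rw [gg_lintegral]
  exact ENNReal.ofReal_lt_top

lemma gg_intervalIntegrable : IntervalIntegrable gg volume 0 π := by
  rw [intervalIntegrable_iff_integrableOn_Ioc_of_le Real.pi_pos.le]
  exact gg_integrableOn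

lemma S_nonneg : 0 ≤ ∑' k : ℕ, dd (k+1) / ((k:ℝ)+1) :=
  tsum_nonneg (fun k => div_nonneg (dd_pos _).le (by positivity))

lemma gg_integral : ∫ x in (0:ℝ)..π, gg x = π * ∑' k : ℕ, dd (k+1) / (k+1) := by
  rw [intervalIntegral.integral_of_le Real.pi_pos.le]
  rw [MeasureTheory.integral_eq_lintegral_of_nonneg_ae
    (Filter.Eventually.of_forall gg_nonneg) gg_measurable.aestronglyMeasurable]
  rw [gg_lintegral, ENNReal.toReal_ofReal]
  have := S_nonneg
  positivity


noncomputable def cc (x : ℝ) : ℝ := Real.log |Real.cos x|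
noncomputable def ss (x : ℝ) : ℝ := Real.log |Real.sin x|

lemma cc_eq_gg : cc = fun x => (-1/2) * gg x := by
  funext x; rw [gg_eq]; unfold cc; ring

lemma cc_intervalIntegrable : IntervalIntegrable cc volume 0 π := by
  rw [cc_eq_gg]; exact gg_intervalIntegrable.const_mul _

lemma cc_integral : ∫ x in (0:ℝ)..π, cc x = -(π * ∑' k : ℕ, dd (k+1) / (k+1)) / 2 := by
  rw [cc_eq_gg, intervalIntegral.integral_const_mul, gg_integral]; ring

lemma ss_eq_cc_comp : ss = fun x => cc (π/2 - x) := by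
  funext x; unfold ss cc; rw [Real.cos_pi_div_two_sub]

lemma cc_eq_ss_comp : cc = fun x => ss (π/2 - x) := by
  funext x; unfold ss cc; rw [Real.sin_pi_div_two_sub]

lemma uIcc_half_subset : Set.uIcc (0:ℝ) (π/2) ⊆ Set.uIcc 0 π := by
  apply Set.uIcc_subset_uIcc
  · simp
  · rw [Set.mem_uIcc]; left; constructor <;> linarith [Real.pi_pos]

lemma uIcc_half_subset' : Set.uIcc (π/2) π ⊆ Set.uIcc (0:ℝ) π := by
  apply Set.uIcc_subset_uIcc
  · rw [Set.mem_uIcc]; left; constructor <;> linarith [Real.pi_pos]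
  · simp

lemma cc_int_half : IntervalIntegrable cc volume 0 (π/2) :=
  cc_intervalIntegrable.mono_set uIcc_half_subset

lemma cc_int_half' : IntervalIntegrable cc volume (π/2) π :=
  cc_intervalIntegrable.mono_set uIcc_half_subset'

lemma ss_int_half : IntervalIntegrable ss volume 0 (π/2) := by
  have h := (cc_int_half.comp_sub_left (π/2)).symm
  simp only [sub_zero, sub_self] at h
  rw [ss_eq_cc_comp]
  exact h

lemma ss_int_half' : IntervalIntegrable ss volume (π/2) π := by
  have h := cc_int_half.comp_sub_right (π/2)
  have : (fun x => cc (x - π/2)) = ss := by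
    funext x; unfold ss cc
    rw [show x - π/2 = -(π/2 - x) by ring, Real.cos_neg, Real.cos_pi_div_two_sub]
  rw [this] at h
  simpa using h

-- B = A
lemma B_eq_A : ∫ x in (0:ℝ)..(π/2), cc x = ∫ x in (0:ℝ)..(π/2), ss x := by
  conv_lhs => rw [cc_eq_ss_comp]
  rw [intervalIntegral.integral_comp_sub_left ss (π/2)]
  norm_num

-- ∫_{π/2}^π cc = A
lemma cc_second : ∫ x in (π/2:ℝ)..π, cc x = ∫ x in (0:ℝ)..(π/2), ss x := by
  have h := intervalIntegral.integral_comp_add_right cc (π/2) (a := 0) (b := π/2)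
  rw [show (0:ℝ) + π/2 = π/2 by ring, show π/2 + π/2 = π by ring] at h
  rw [← h]
  congr 1
  funext x
  unfold ss cc
  rw [Real.cos_add_pi_div_two, abs_neg]

-- ∫_{π/2}^π ss = B
lemma ss_second : ∫ x in (π/2:ℝ)..π, ss x = ∫ x in (0:ℝ)..(π/2), cc x := by
  have h := intervalIntegral.integral_comp_add_right ss (π/2) (a := 0) (b := π/2)
  rw [show (0:ℝ) + π/2 = π/2 by ring, show π/2 + π/2 = π by ring] at h
  rw [← h]
  congr 1
  funext x
  unfold ss cc
  rw [Real.sin_add_pi_div_two]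

lemma J_eq : ∫ x in (0:ℝ)..π, cc x
    = (∫ x in (0:ℝ)..(π/2), cc x) + ∫ x in (0:ℝ)..(π/2), ss x := by
  rw [← intervalIntegral.integral_add_adjacent_intervals cc_int_half cc_int_half', cc_second]

lemma I_eq : ∫ x in (0:ℝ)..π, ss x
    = (∫ x in (0:ℝ)..(π/2), ss x) + ∫ x in (0:ℝ)..(π/2), cc x := by
  rw [← intervalIntegral.integral_add_adjacent_intervals ss_int_half ss_int_half', ss_second]

lemma double_eq_1 : ∫ x in (0:ℝ)..(π/2), ss (2*x) = (∫ x in (0:ℝ)..π, ss x) / 2 := by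
  have h := intervalIntegral.integral_comp_mul_left ss (two_ne_zero) (a := (0:ℝ)) (b := π/2)
  rw [show (2:ℝ) * 0 = 0 by ring, show (2:ℝ) * (π/2) = π by ring] at h
  rw [h, smul_eq_mul]
  ring

lemma double_eq_2 : ∫ x in (0:ℝ)..(π/2), ss (2*x)
    = (π/2) * Real.log 2 + (∫ x in (0:ℝ)..(π/2), ss x) + ∫ x in (0:ℝ)..(π/2), cc x := by
  have hcongr : ∫ x in (0:ℝ)..(π/2), ss (2*x)
      = ∫ x in (0:ℝ)..(π/2), (Real.log 2 + ss x + cc x) := by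
    apply intervalIntegral.integral_congr_ae
    have h0 : ∀ᵐ x : ℝ ∂volume, x ≠ π/2 := by
      rw [MeasureTheory.ae_iff]
      simpa using Real.volume_singleton (a := π/2)
    filter_upwards [h0] with x hx hmem
    rw [Set.uIoc_of_le (by linarith [Real.pi_pos])] at hmem
    obtain ⟨h1, h2⟩ := hmem
    have h2' : x < π/2 := lt_of_le_of_ne h2 hx
    have hsin : 0 < Real.sin x := Real.sin_pos_of_pos_of_lt_pi h1 (by linarith [Real.pi_pos])
    have hcos : 0 < Real.cos x := Real.cos_pos_of_mem_Ioo ⟨by linarith [Real.pi_pos], h2'⟩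
    unfold ss cc
    rw [Real.sin_two_mul]
    rw [abs_of_pos (by positivity), abs_of_pos hsin, abs_of_pos hcos]
    rw [Real.log_mul (by positivity) hcos.ne', Real.log_mul two_ne_zero hsin.ne']
  rw [hcongr]
  rw [intervalIntegral.integral_add ((_root_.intervalIntegrable_const).add ss_int_half) cc_int_half,
    intervalIntegral.integral_add (_root_.intervalIntegrable_const) ss_int_half,
    intervalIntegral.integral_const]
  simp [smul_eq_mul]

lemma A_val : ∫ x in (0:ℝ)..(π/2), ss x = -(π/2) * Real.log 2 := by
  have h1 := double_eq_1
  have h2 := double_eq_2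
  have h3 := I_eq
  have h4 := B_eq_A
  rw [h3] at h1
  rw [h4] at h1 h2
  -- h1 : ∫ ss(2x) = (A + A)/2 = A ; h2: ∫ ss(2x) = π/2 log2 + A + A
  set A := ∫ x in (0:ℝ)..(π/2), ss x
  linarith [h1, h2]

lemma Sval : ∑' k : ℕ, dd (k+1) / ((k:ℝ)+1) = 2 * Real.log 2 := by
  have hJ := J_eq
  rw [B_eq_A, cc_integral] at hJ
  rw [A_val] at hJ
  have hpi := Real.pi_pos
  have : π * ∑' k : ℕ, dd (k+1) / ((k:ℝ)+1) = π * (2 * Real.log 2) := by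
    linarith
  exact mul_left_cancel₀ hpi.ne' this


lemma HH_one : HH 1 = 1 := by simp [HH]

lemma partial_sum_eq (N : ℕ) :
    ∑ n ∈ range N, HH (n+1) * dd (n+1) / ((n:ℝ)+2)
      = 2 * (∑ k ∈ range (N+1), dd (k+1)/((k:ℝ)+1)) - 2 * (HH (N+1) * dd (N+1)) := by
  induction N with
  | zero => simp [HH_one, dd_one]
  | succ M ih =>
    rw [Finset.sum_range_succ, ih, Finset.sum_range_succ (n := M+1)]
    have hk := dd_key (M+1)
    have hH := HH_succ (M+1)
    push_cast at hk hH ⊢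
    rw [hH, mul_div_assoc]
    rw [show ((M:ℝ)+1+1) = (M:ℝ)+2 by ring] at hk
    rw [hk]
    ring

theorem sum_harmonic_central_binom_succ :
    ∑' n : ℕ, (∑ k ∈ Finset.Icc 1 (n + 1), (1 : ℝ) / k) *
        ((2 * (n + 1)).choose (n + 1)) / (((n + 1) + 1) * 4 ^ (n + 1))
      = 4 * Real.log 2 := by
  have hterm : ∀ n : ℕ, (∑ k ∈ Finset.Icc 1 (n + 1), (1 : ℝ) / k) *
        ((2 * (n + 1)).choose (n + 1)) / (((n + 1) + 1) * 4 ^ (n + 1))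
      = HH (n+1) * dd (n+1) / ((n:ℝ)+2) := by
    intro n
    have : ((2 * (n + 1)).choose (n + 1) : ℝ) = (Nat.centralBinom (n+1) : ℝ) := by
      rw [Nat.centralBinom]
    rw [this]
    unfold HH dd
    have h4 : (4:ℝ)^(n+1) ≠ 0 := by positivity
    have h2 : ((n:ℝ)+1+1) ≠ 0 := by positivity
    rw [show ((n:ℝ)+1+1) = (n:ℝ)+2 by ring, mul_div_assoc, div_mul_eq_div_div_swap,
      ← mul_div_assoc, mul_div_assoc ]
  have hnonneg : ∀ n : ℕ, 0 ≤ HH (n+1) * dd (n+1) / ((n:ℝ)+2) := by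
    intro n
    have := HH_nonneg (n+1); have := (dd_pos (n+1)).le
    positivity
  have hlim : Filter.Tendsto (fun N => ∑ n ∈ range N, HH (n+1) * dd (n+1) / ((n:ℝ)+2))
      Filter.atTop (nhds (4 * Real.log 2)) := by
    simp only [partial_sum_eq]
    have h1 : Filter.Tendsto (fun N : ℕ => ∑ k ∈ range (N+1), dd (k+1)/((k:ℝ)+1))
        Filter.atTop (nhds (2 * Real.log 2)) := by
      have := summable_ddn.hasSum.tendsto_sum_nat
      rw [Sval] at this
      exact this.comp (tendsto_add_atTop_nat 1)
    have h2 : Filter.Tendsto (fun N : ℕ => HH (N+1) * dd (N+1)) Filter.atTop (nhds 0) :=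
      tendsto_Hdd.comp (tendsto_add_atTop_nat 1)
    have := (h1.const_mul 2).sub (h2.const_mul 2)
    rw [show (4:ℝ) * Real.log 2 = 2 * (2 * Real.log 2) - 2 * 0 by ring]
    exact this
  have hhs : HasSum (fun n : ℕ => HH (n+1) * dd (n+1) / ((n:ℝ)+2)) (4 * Real.log 2) :=
    (hasSum_iff_tendsto_nat_of_nonneg hnonneg _).mpr hlim
  calc ∑' n : ℕ, (∑ k ∈ Finset.Icc 1 (n + 1), (1 : ℝ) / k) *
        ((2 * (n + 1)).choose (n + 1)) / (((n + 1) + 1) * 4 ^ (n + 1))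
      = ∑' n : ℕ, HH (n+1) * dd (n+1) / ((n:ℝ)+2) := by
        apply tsum_congr; intro n; exact hterm n
    _ = 4 * Real.log 2 := hhs.tsum_eq
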